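/- The function H̃ satisfies lim_{q → +∞} H̃(q) = 1. -/

import Mathlib

open Filter Set

/-- `w` is the root of `q (z^3 - z) + 1 = 0` with `Im w ≥ 0`, `Re w > 0` having the
smallest real part among all such roots. -/
def IsQtilde (q : ℝ) (w : ℂ) : Prop :=
  (q : ℂ) * (w ^ 3 - w) + 1 = 0 ∧ 0 ≤ w.im ∧ 0 < w.re ∧
    ∀ z : ℂ, (q : ℂ) * (z ^ 3 - z) + 1 = 0 → 0 ≤ z.im → 0 < z.re → w.re ≤ z.re

/-- `H̃(q) = |(q̃ - 1)/(q̃ + 1)| · exp(q · Re(q̃²))` where `q̃` is the distinguished root. -/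
noncomputable def Htilde (q : ℝ) : ℝ :=
  ‖(Classical.epsilon (IsQtilde q) - 1) / (Classical.epsilon (IsQtilde q) + 1)‖ *
    Real.exp (q * ((Classical.epsilon (IsQtilde q)) ^ 2).re)

/-! For `q² ≥ 8` the cubic `q (z³ - z) + 1` has a real root in `(0, 2/q]` by the intermediate value
theorem, so the distinguished root `q̃` exists and has `0 < Re q̃ ≤ 2/q`. Then
`|q̃| |q̃² - 1| = 1/q` together with `|q̃² - 1| ≥ 1 - (Re q̃)² ≥ 1/2` gives `|q̃| ≤ 2/q`. Hence `q̃ → 0`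
and `|q Re(q̃²)| ≤ 4/q → 0`, so both factors of `H̃(q)` tend to `1`. -/

theorem Complex.one_sub_re_sq_le_norm_sq_sub_one (w : ℂ) : 1 - w.re ^ 2 ≤ ‖w ^ 2 - 1‖ := by
  have hre : (w ^ 2 - 1).re = w.re ^ 2 - w.im ^ 2 - 1 := by simp [pow_two]
  have h := neg_le_of_abs_le (Complex.abs_re_le_norm (w ^ 2 - 1))
  nlinarith [sq_nonneg w.im]

theorem finite_setOf_mul_cube_sub_add_one_eq_zero (q : ℂ) :
    {z : ℂ | q * (z ^ 3 - z) + 1 = 0}.Finite := by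
  open Polynomial in
  have hp : C q * (X ^ 3 - X) + 1 ≠ 0 := fun h => by simpa using congrArg (eval 0) h
  exact (finite_setOfPred_isRoot hp).subset fun z hz => by simpa using hz

theorem exists_root_mem_Ioc {q : ℝ} (hq : 0 < q) (hq8 : 8 ≤ q ^ 2) :
    ∃ r ∈ Ioc 0 (2 / q), q * (r ^ 3 - r) + 1 = 0 := by
  set f : ℝ → ℝ := fun x => q * (x ^ 3 - x) + 1
  have hf2 : f (2 / q) ≤ 0 := by
    have : f (2 / q) = (8 - q ^ 2) / q ^ 2 := by simp only [f]; field_simp; ring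
    rw [this]
    exact div_nonpos_of_nonpos_of_nonneg (by linarith) (sq_nonneg q)
  obtain ⟨r, hr, hfr⟩ := intermediate_value_Icc' (by positivity : (0 : ℝ) ≤ 2 / q)
    (by fun_prop : ContinuousOn f _) (show (0 : ℝ) ∈ Icc (f (2 / q)) (f 0) by simp [f, hf2])
  have hr0 : r ≠ 0 := by rintro rfl; simp [f] at hfr
  exact ⟨r, ⟨lt_of_le_of_ne hr.1 hr0.symm, hr.2⟩, hfr⟩

theorem IsQtilde.re_le {q r : ℝ} {w : ℂ} (hw : IsQtilde q w) (hr : 0 < r)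
    (hroot : q * (r ^ 3 - r) + 1 = 0) : w.re ≤ r :=
  hw.2.2.2 r (by exact_mod_cast hroot) (by simp) (by simpa using hr)

theorem exists_isQtilde {q : ℝ} (hq : 0 < q) (hq8 : 8 ≤ q ^ 2) : ∃ w, IsQtilde q w := by
  obtain ⟨r, hr, hroot⟩ := exists_root_mem_Ioc hq hq8
  let S := {z : ℂ | (q : ℂ) * (z ^ 3 - z) + 1 = 0} ∩ {z | 0 ≤ z.im ∧ 0 < z.re}
  have hrS : (r : ℂ) ∈ S := ⟨show _ = _ by exact_mod_cast hroot, by simp, by simpa using hr.1⟩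
  obtain ⟨w, ⟨hw, him, hre⟩, hmin⟩ :=
    S.exists_min_image Complex.re
      ((finite_setOf_mul_cube_sub_add_one_eq_zero q).inter_of_left _) ⟨_, hrS⟩
  exact ⟨w, hw, him, hre, fun z hz him hre => hmin z ⟨hz, him, hre⟩⟩

theorem norm_le_of_mul_cube_sub_add_one_eq_zero {q : ℝ} {w : ℂ} (hq : 0 < q) (hq8 : 8 ≤ q ^ 2)
    (hw : (q : ℂ) * (w ^ 3 - w) + 1 = 0) (hre : |w.re| ≤ 2 / q) : ‖w‖ ≤ 2 / q := by
  have hprod : q * (‖w‖ * ‖w ^ 2 - 1‖) = 1 := by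
    have h := congrArg norm (show (q : ℂ) * (w * (w ^ 2 - 1)) = -1 by linear_combination hw)
    rwa [norm_mul, norm_mul, Complex.norm_real, Real.norm_of_nonneg hq.le, norm_neg,
      norm_one] at h
  have hre2 : w.re ^ 2 ≤ 1 / 2 := calc
    w.re ^ 2 = |w.re| ^ 2 := (sq_abs _).symm
    _ ≤ (2 / q) ^ 2 := pow_le_pow_left₀ (abs_nonneg _) hre 2
    _ ≤ 1 / 2 := by rw [div_pow, div_le_div_iff₀ (by positivity) two_pos]; linarith
  have hhalf : 1 / 2 ≤ ‖w ^ 2 - 1‖ := by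
    linarith [Complex.one_sub_re_sq_le_norm_sq_sub_one w]
  rw [le_div_iff₀ hq]
  nlinarith [norm_nonneg w]

theorem IsQtilde.norm_le {q : ℝ} {w : ℂ} (hw : IsQtilde q w) (hq : 0 < q) (hq8 : 8 ≤ q ^ 2) :
    ‖w‖ ≤ 2 / q := by
  obtain ⟨r, ⟨hr0, hr⟩, hroot⟩ := exists_root_mem_Ioc hq hq8
  refine norm_le_of_mul_cube_sub_add_one_eq_zero hq hq8 hw.1 ?_
  rw [abs_of_pos hw.2.2.1]
  exact (hw.re_le hr0 hroot).trans hr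

theorem eventually_norm_epsilon_isQtilde_le :
    ∀ᶠ q in atTop, ‖Classical.epsilon (IsQtilde q)‖ ≤ 2 / q := by
  filter_upwards [eventually_ge_atTop 3] with q hq
  have hq0 : 0 < q := by linarith
  have hq8 : 8 ≤ q ^ 2 := by nlinarith
  exact (Classical.epsilon_spec (exists_isQtilde hq0 hq8)).norm_le hq0 hq8

theorem tendsto_epsilon_isQtilde :
    Tendsto (fun q => Classical.epsilon (IsQtilde q)) atTop (nhds 0) :=
  squeeze_zero_norm' eventually_norm_epsilon_isQtilde_le
    (tendsto_const_nhds.div_atTop tendsto_id)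

theorem tendsto_mul_re_sq_epsilon_isQtilde :
    Tendsto (fun q => q * (Classical.epsilon (IsQtilde q) ^ 2).re) atTop (nhds 0) := by
  refine squeeze_zero_norm' ?_
    (tendsto_const_nhds.div_atTop tendsto_id : Tendsto (fun q : ℝ => 4 / q) atTop (nhds 0))
  filter_upwards [eventually_norm_epsilon_isQtilde_le, eventually_gt_atTop 0] with q hw hq
  calc ‖q * (Classical.epsilon (IsQtilde q) ^ 2).re‖
      ≤ q * ‖Classical.epsilon (IsQtilde q)‖ ^ 2 := by
        rw [norm_mul, Real.norm_of_nonneg hq.le, ← norm_pow]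
        exact mul_le_mul_of_nonneg_left (Complex.abs_re_le_norm _) hq.le
    _ ≤ q * (2 / q) ^ 2 := by gcongr
    _ = 4 / q := by field_simp; ring

/-- H̃(q) → 1 as q → +∞. -/
theorem Htilde_tendsto_atTop :
    Tendsto Htilde atTop (nhds 1) := by
  have hratio := ((tendsto_epsilon_isQtilde.sub_const 1).div
    (tendsto_epsilon_isQtilde.add_const 1) (by norm_num)).norm
  have hexp := (Real.continuous_exp.tendsto 0).comp tendsto_mul_re_sq_epsilon_isQtilde
  unfold Htilde
  simpa using hratio.mul hexp
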